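/- A weighted median of proxy positions, with weights induced by nearest-proxy delegation, always equals the report of the proxy to whom the median voter delegates: letting i* be the median voter of the combined profile (s, p|_N) with m+n odd, the proxy \varphi_{i*}(s) has total weight strictly greater than the sum of weights of proxies strictly on the far side of it, on each side; hence its position is a weighted median. -/

import Mathlib

/-!
A report to the left of the median voter's proxy `s j₀` is farther from `μ` than `s j₀` is, so it
lies left of `μ`; a follower delegating to it is closer to it than to `s j₀`, so it lies left of
the midpoint of the two reports, which is itself left of `μ`. Hence every voter counted in the
weight strictly left of `s j₀` sits strictly left of the median `μ`, and there are at most half of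
those. The right side is the mirror image.
-/

/-- `x` is a median of the multiset `P`. -/
def IsMedian (P : Multiset ℝ) (x : ℝ) : Prop :=
  x ∈ P ∧ 2 * (P.filter (fun y => y < x)).card ≤ P.card ∧
    2 * (P.filter (fun y => x < y)).card ≤ P.card

/-- The combined multiset of positions of proxies and followers. -/
def combined {m n : ℕ} (s : Fin m → ℝ) (p : Fin n → ℝ) : Multiset ℝ :=
  Finset.univ.val.map s + Finset.univ.val.map p

/-- The weight of proxy `k`: itself plus the followers delegating to it. -/
def weight {m n : ℕ} (φ : Fin n → Fin m) (k : Fin m) : ℕ :=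
  1 + (Finset.univ.filter (fun i : Fin n => φ i = k)).card

open Finset

section Midpoint

variable {a b y : ℝ}

lemma abs_sub_lt_abs_sub_iff_lt_midpoint (hab : a < b) :
    |a - y| < |b - y| ↔ 2 * y < a + b := by
  rw [← sq_lt_sq, ← sub_pos, show (b - y) ^ 2 - (a - y) ^ 2 = (b - a) * (a + b - 2 * y) by ring,
    mul_pos_iff_of_pos_left (sub_pos.2 hab), sub_pos]

lemma abs_sub_lt_abs_sub_iff_midpoint_lt (hab : a < b) :
    |b - y| < |a - y| ↔ a + b < 2 * y := by
  rw [← sq_lt_sq, ← sub_pos, show (a - y) ^ 2 - (b - y) ^ 2 = (b - a) * (2 * y - (a + b)) by ring,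
    mul_pos_iff_of_pos_left (sub_pos.2 hab), sub_pos]

end Midpoint

section Weight

variable {m n : ℕ} (φ : Fin n → Fin m)

lemma sum_weight (A : Finset (Fin m)) :
    ∑ k ∈ A, weight φ k = #A + #{i | φ i ∈ A} := by
  simp only [weight, sum_add_distrib, sum_const, smul_eq_mul, mul_one,
    sum_card_fiberwise_eq_card_filter]

lemma sum_weight_univ : ∑ k, weight φ k = m + n := by
  simp [sum_weight]

end Weight

lemma card_filter_combined {m n : ℕ} (s : Fin m → ℝ) (p : Fin n → ℝ) (q : ℝ → Prop)
    [DecidablePred q] :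
    ((combined s p).filter q).card = #{k | q (s k)} + #{i | q (p i)} := by
  simp only [combined, Multiset.filter_add, Multiset.card_add, Multiset.filter_map,
    Multiset.card_map]
  rfl

lemma card_combined {m n : ℕ} (s : Fin m → ℝ) (p : Fin n → ℝ) :
    (combined s p).card = m + n := by
  simp [combined]

section Delegation

variable {m n : ℕ} {s : Fin m → ℝ} {p : Fin n → ℝ} {φ : Fin n → Fin m}
  (hφ : ∀ i k, k ≠ φ i → |s (φ i) - p i| < |s k - p i|)
  {μ : ℝ} {j0 : Fin m} (hj0 : ∀ k ≠ j0, |s j0 - μ| < |s k - μ|)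
include hφ hj0

lemma sum_weight_lt_le_card_filter_lt :
    ∑ k ∈ {k | s k < s j0}, weight φ k ≤ ((combined s p).filter (· < μ)).card := by
  rw [sum_weight, card_filter_combined]
  refine add_le_add (card_le_card fun k hk => ?_) (card_le_card fun i hi => ?_)
  · simp only [mem_filter, mem_univ, true_and] at hk ⊢
    have := (abs_sub_lt_abs_sub_iff_midpoint_lt hk).1 (hj0 k (ne_of_apply_ne s hk.ne))
    linarith
  · simp only [mem_filter, mem_univ, true_and] at hi ⊢
    have hμ := (abs_sub_lt_abs_sub_iff_midpoint_lt hi).1 (hj0 (φ i) (ne_of_apply_ne s hi.ne))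
    have hp := (abs_sub_lt_abs_sub_iff_lt_midpoint hi).1 (hφ i j0 (ne_of_apply_ne s hi.ne'))
    linarith

lemma sum_weight_gt_le_card_filter_gt :
    ∑ k ∈ {k | s j0 < s k}, weight φ k ≤ ((combined s p).filter (μ < ·)).card := by
  have hφ' : ∀ i k, k ≠ φ i → |(-s) (φ i) - (-p) i| < |(-s) k - (-p) i| := fun i k hk => by
    simpa only [Pi.neg_apply, neg_sub_neg, abs_sub_comm (p i)] using hφ i k hk
  have hj0' : ∀ k ≠ j0, |(-s) j0 - -μ| < |(-s) k - -μ| := fun k hk => by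
    simpa only [Pi.neg_apply, neg_sub_neg, abs_sub_comm μ] using hj0 k hk
  simpa [card_filter_combined] using sum_weight_lt_le_card_filter_lt hφ' hj0'

end Delegation

theorem median_voter_proxy_is_weighted_median_general {m n : ℕ}
    (s : Fin m → ℝ) (p : Fin n → ℝ)
    (φ : Fin n → Fin m)
    (hφ : ∀ i k, k ≠ φ i → |s (φ i) - p i| < |s k - p i|)
    (μ : ℝ) (hμ : IsMedian (combined s p) μ)
    (j0 : Fin m) (hj0 : ∀ k ≠ j0, |s j0 - μ| < |s k - μ|) :
    2 * (∑ k ∈ Finset.univ.filter (fun k => s k < s j0), weight φ k) ≤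
        (∑ k : Fin m, weight φ k) ∧
    2 * (∑ k ∈ Finset.univ.filter (fun k => s j0 < s k), weight φ k) ≤
        (∑ k : Fin m, weight φ k) := by
  obtain ⟨-, hlt, hgt⟩ := hμ
  rw [card_combined] at hlt hgt
  rw [sum_weight_univ]
  exact ⟨(Nat.mul_le_mul_left 2 (sum_weight_lt_le_card_filter_lt hφ hj0)).trans hlt,
    (Nat.mul_le_mul_left 2 (sum_weight_gt_le_card_filter_gt hφ hj0)).trans hgt⟩

/-- With weights induced by nearest-proxy delegation, the report of the proxy
nearest the median voter of the combined profile (the proxy to whom the median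
voter delegates) is always a weighted median of the proxy reports: on each side,
the total weight of proxies strictly beyond it is at most half the total weight. -/
theorem median_voter_proxy_is_weighted_median {m n : ℕ} (hodd : Odd (m + n))
    (s : Fin m → ℝ) (p : Fin n → ℝ) (hs : Function.Injective s)
    (φ : Fin n → Fin m)
    (hφ : ∀ i k, k ≠ φ i → |s (φ i) - p i| < |s k - p i|)
    (μ : ℝ) (hμ : IsMedian (combined s p) μ)
    (j0 : Fin m) (hj0 : ∀ k ≠ j0, |s j0 - μ| < |s k - μ|) :
    2 * (∑ k ∈ Finset.univ.filter (fun k => s k < s j0), weight φ k) ≤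
        (∑ k : Fin m, weight φ k) ∧
    2 * (∑ k ∈ Finset.univ.filter (fun k => s j0 < s k), weight φ k) ≤
        (∑ k : Fin m, weight φ k) :=
  median_voter_proxy_is_weighted_median_general s p φ hφ μ hμ j0 hj0
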